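/- Let π_f be the probability measure with density f with respect to π, where f ≥ 0 and E_π f = 1. Then E_π[f log(dπ/dρ)] ≤ E_π[f log f] + log(1 + χ²(π∥ρ)), where π ≪ ρ. -/

import Mathlib

/-!
With `g = dμ/dρ`, `1 + χ²(μ‖ρ) = ∫ g² dρ = ∫ g dμ =: c`, and `c ≥ 1` since `2g ≤ g² + 1` and
`∫ g dρ = 1`. Gibbs' inequality `a log b ≤ a log a + b - a` at `a = f`, `b = g / c`, integrated
against `μ`, gives `∫ f log g ≤ ∫ f log f + log c`: the terms `g / c - f` integrate to `0`.
When `f log g` is not integrable its integral is `0`, and the right-hand side is nonnegative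
(the same inequality with `g = 1`).
-/

open MeasureTheory ENNReal

noncomputable def chi2ENN {Y : Type*} [MeasurableSpace Y] (ρ σ : Measure Y) : ℝ≥0∞ :=
  (∫⁻ y, (ρ.rnDeriv σ y) ^ 2 ∂σ) - 1

open Real in
theorem Real.mul_log_le_mul_log_add_sub {a b : ℝ} (ha : 0 ≤ a) (hb : 0 < b) :
    a * log b ≤ a * log a + b - a := by
  rcases ha.eq_or_lt with rfl | ha
  · simpa using hb.le
  have h := mul_le_mul_of_nonneg_left (log_le_sub_one_of_pos (div_pos hb ha)) ha.le
  rw [log_div hb.ne' ha.ne', mul_sub, mul_sub, mul_div_cancel₀ _ ha.ne'] at h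
  linarith

theorem ENNReal.two_mul_le_sq_add_one (a : ℝ≥0∞) : 2 * a ≤ a ^ 2 + 1 := by
  rcases eq_or_ne a ⊤ with rfl | h
  · simp
  lift a to NNReal using h
  exact_mod_cast (by simpa using two_mul_le_add_sq a 1 : 2 * a ≤ a ^ 2 + 1)

section
variable {Ω : Type*} [MeasurableSpace Ω]

theorem one_le_lintegral_sq_of_lintegral_eq_one {ν : Measure Ω} [IsProbabilityMeasure ν]
    {g : Ω → ℝ≥0∞} (hg1 : ∫⁻ ω, g ω ∂ν = 1) :
    1 ≤ ∫⁻ ω, g ω ^ 2 ∂ν := by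
  have h : 2 * ∫⁻ ω, g ω ∂ν ≤ ∫⁻ ω, g ω ^ 2 ∂ν + 1 := by
    calc 2 * ∫⁻ ω, g ω ∂ν = ∫⁻ ω, 2 * g ω ∂ν := (lintegral_const_mul' _ _ (by simp)).symm
      _ ≤ ∫⁻ ω, (g ω ^ 2 + 1) ∂ν := lintegral_mono fun ω => two_mul_le_sq_add_one (g ω)
      _ = ∫⁻ ω, g ω ^ 2 ∂ν + 1 := by rw [lintegral_add_right' _ aemeasurable_const]; simp
  rw [hg1, mul_one, ← one_add_one_eq_two] at h
  exact (ENNReal.add_le_add_iff_right one_ne_top).1 h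

theorem lintegral_rnDeriv_sq_eq {μ ν : Measure Ω} [μ.HaveLebesgueDecomposition ν] (hμν : μ ≪ ν) :
    ∫⁻ ω, μ.rnDeriv ν ω ^ 2 ∂ν = ∫⁻ ω, μ.rnDeriv ν ω ∂μ := by
  simp_rw [sq]
  exact lintegral_rnDeriv_mul hμν (Measure.measurable_rnDeriv μ ν).aemeasurable

theorem one_add_chi2ENN_eq_lintegral_rnDeriv {μ ν : Measure Ω} [IsProbabilityMeasure μ]
    [IsProbabilityMeasure ν] (hμν : μ ≪ ν) : 1 + chi2ENN μ ν = ∫⁻ ω, μ.rnDeriv ν ω ∂μ := by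
  have h1 : 1 ≤ ∫⁻ ω, μ.rnDeriv ν ω ^ 2 ∂ν :=
    one_le_lintegral_sq_of_lintegral_eq_one (by simp [Measure.lintegral_rnDeriv hμν])
  rw [chi2ENN, add_tsub_cancel_of_le h1, lintegral_rnDeriv_sq_eq hμν]

open Real in
theorem integral_mul_log_le_integral_mul_log_add_log_integral {μ : Measure Ω} {f h : Ω → ℝ}
    (hf0 : 0 ≤ᵐ[μ] f) (hf1 : ∫ ω, f ω ∂μ = 1)
    (hflog : Integrable (fun ω => f ω * log (f ω)) μ) (hh0 : ∀ᵐ ω ∂μ, 0 < h ω)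
    (hh : Integrable h μ) (hfh : Integrable (fun ω => f ω * log (h ω)) μ) :
    ∫ ω, f ω * log (h ω) ∂μ ≤ ∫ ω, f ω * log (f ω) ∂μ + log (∫ ω, h ω ∂μ) := by
  have hf : Integrable f μ := Integrable.of_integral_ne_zero (by simp [hf1])
  have hμ : μ ≠ 0 := by rintro rfl; simp at hf1
  set c := ∫ ω, h ω ∂μ
  have hc : 0 < c := by
    rw [integral_pos_iff_support_of_nonneg_ae (hh0.mono fun _ => le_of_lt) hh]
    have : (ae μ).NeBot := ae_neBot.2 hμ
    exact pos_iff_ne_zero.2 (frequently_ae_mem_iff.1 (hh0.mono fun _ => ne_of_gt).frequently)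
  have hpt : ∀ᵐ ω ∂μ, f ω * log (h ω) ≤ f ω * log (f ω) + (h ω / c - f ω + f ω * log c) := by
    filter_upwards [hf0, hh0] with ω hfω hhω
    have := mul_log_le_mul_log_add_sub hfω (div_pos hhω hc)
    rw [log_div hhω.ne' hc.ne'] at this
    linarith
  have hsub : Integrable (fun ω => h ω / c - f ω) μ := (hh.div_const c).sub hf
  have hrest : Integrable (fun ω => h ω / c - f ω + f ω * log c) μ := hsub.add (hf.mul_const _)
  calc ∫ ω, f ω * log (h ω) ∂μ
      ≤ ∫ ω, f ω * log (f ω) + (h ω / c - f ω + f ω * log c) ∂μ :=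
        integral_mono_ae hfh (hflog.add hrest) hpt
    _ = ∫ ω, f ω * log (f ω) ∂μ + log c := by
        rw [integral_add hflog hrest, integral_add hsub (hf.mul_const _),
          integral_sub (hh.div_const c) hf, integral_div, integral_mul_const, hf1,
          div_self hc.ne']
        ring

theorem integral_mul_log_nonneg {μ : Measure Ω} [IsProbabilityMeasure μ] {f : Ω → ℝ}
    (hf0 : 0 ≤ᵐ[μ] f) (hf1 : ∫ ω, f ω ∂μ = 1)
    (hflog : Integrable (fun ω => f ω * Real.log (f ω)) μ) :
    0 ≤ ∫ ω, f ω * Real.log (f ω) ∂μ := by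
  simpa using integral_mul_log_le_integral_mul_log_add_log_integral hf0 hf1 hflog
    (h := fun _ => 1) (by simp) (integrable_const 1) (by simp)

end

theorem tilted_log_density_bound_general {Ω : Type*} [MeasurableSpace Ω] (μ ρ : Measure Ω)
    [IsProbabilityMeasure μ] [IsProbabilityMeasure ρ] (hac : μ ≪ ρ)
    (f : Ω → ℝ) (hf0 : 0 ≤ f)
    (hfone : ∫ ω, f ω ∂μ = 1)
    (hflog : Integrable (fun ω => f ω * Real.log (f ω)) μ) :
    ((∫ ω, f ω * Real.log ((μ.rnDeriv ρ ω).toReal) ∂μ : ℝ) : EReal)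
      ≤ ((∫ ω, f ω * Real.log (f ω) ∂μ : ℝ) : EReal)
        + ENNReal.log (1 + chi2ENN μ ρ) := by
  have hS1 : 1 ≤ ∫⁻ ω, μ.rnDeriv ρ ω ∂μ := one_add_chi2ENN_eq_lintegral_rnDeriv hac ▸ le_self_add
  rw [one_add_chi2ENN_eq_lintegral_rnDeriv hac]
  obtain hS | hS := eq_or_ne (∫⁻ ω, μ.rnDeriv ρ ω ∂μ) ⊤
  · simp [hS]
  have hdens : AEMeasurable (μ.rnDeriv ρ) μ := (Measure.measurable_rnDeriv μ ρ).aemeasurable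
  have hfin : ∀ᵐ ω ∂μ, μ.rnDeriv ρ ω < ⊤ := hac.ae_le (Measure.rnDeriv_lt_top μ ρ)
  rw [ENNReal.log_pos_real (zero_lt_one.trans_le hS1).ne' hS, ← EReal.coe_add,
    EReal.coe_le_coe_iff, ← integral_toReal hdens hfin]
  by_cases hint : Integrable (fun ω => f ω * Real.log ((μ.rnDeriv ρ ω).toReal)) μ
  · exact integral_mul_log_le_integral_mul_log_add_log_integral (.of_forall hf0) hfone hflog
      (by filter_upwards [Measure.rnDeriv_pos hac, hfin] with ω h0 htop
          exact ENNReal.toReal_pos h0.ne' htop.ne)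
      (integrable_toReal_of_lintegral_ne_top hdens hS) hint
  · rw [integral_undef hint, integral_toReal hdens hfin]
    exact add_nonneg (integral_mul_log_nonneg (.of_forall hf0) hfone hflog)
      (Real.log_nonneg (by simpa using ENNReal.toReal_mono hS hS1))

theorem tilted_log_density_bound {Ω : Type*} [MeasurableSpace Ω] (μ ρ : Measure Ω)
    [IsProbabilityMeasure μ] [IsProbabilityMeasure ρ] (hac : μ ≪ ρ)
    (f : Ω → ℝ) (hf : Measurable f) (hf0 : 0 ≤ f)
    (hfone : ∫ ω, f ω ∂μ = 1)
    (hflog : Integrable (fun ω => f ω * Real.log (f ω)) μ) :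
    ((∫ ω, f ω * Real.log ((μ.rnDeriv ρ ω).toReal) ∂μ : ℝ) : EReal)
      ≤ ((∫ ω, f ω * Real.log (f ω) ∂μ : ℝ) : EReal)
        + ENNReal.log (1 + chi2ENN μ ρ) :=
  tilted_log_density_bound_general μ ρ hac f hf0 hfone hflog
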